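/- arXiv:math/0608592 — 3 statements merged into one kernel-verified Lean document; each statement's English description precedes it below -/
import Mathlib

section
/- Companion observers applying SSA without SIA agree when both use the combined reference class of both types: for all positive real numbers xA, xB, yA, yB, ((xA/xB)·((xB + yB)/(xA + yA)))·(min(1, yA/xA)/min(1, yB/xB)) = ((yA/yB)·((xB + yB)/(xA + yA)))·(min(1, xA/yA)/min(1, xB/yB)), and both sides equal (min(xA, yA)/min(xB, yB))·((xB + yB)/(xA + yA)). -/
lemma min_one_div (x y : ℝ) (hx : 0 < x) : min 1 (y / x) = min x y / x := by
  rw [← min_div_div_right hx.le, div_self hx.ne']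

/-- Companion observers applying SSA without SIA agree when both use the
combined reference class of both types, and the common odds are
(min(xA,yA)/min(xB,yB))·((xB+yB)/(xA+yA)). -/
theorem ssa_without_sia_combined_reference_class_agreement
    (xA xB yA yB : ℝ) (hxA : 0 < xA) (hxB : 0 < xB) (hyA : 0 < yA) (hyB : 0 < yB) :
    ((xA / xB) * ((xB + yB) / (xA + yA))) * (min 1 (yA / xA) / min 1 (yB / xB))
        = ((yA / yB) * ((xB + yB) / (xA + yA))) *
            (min 1 (xA / yA) / min 1 (xB / yB)) ∧
    ((xA / xB) * ((xB + yB) / (xA + yA))) * (min 1 (yA / xA) / min 1 (yB / xB))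
        = (min xA yA / min xB yB) * ((xB + yB) / (xA + yA)) ∧
    ((yA / yB) * ((xB + yB) / (xA + yA))) * (min 1 (xA / yA) / min 1 (xB / yB))
        = (min xA yA / min xB yB) * ((xB + yB) / (xA + yA)) := by
  have h1 := min_one_div xA yA hxA
  have h2 := min_one_div xB yB hxB
  have h3 := min_one_div yA xA hyA
  have h4 := min_one_div yB xB hyB
  have hmA : 0 < min xA yA := lt_min hxA hyA
  have hmB : 0 < min xB yB := lt_min hxB hyB
  rw [h1, h2, h3, h4, min_comm yA xA, min_comm yB xB]
  refine ⟨?_, ?_, ?_⟩ <;> field_simp <;> ring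
end

section
/- Companion observers applying SSA together with SIA agree even when each uses as reference class only observers of its own type: for all positive real numbers xA, xB, yA, yB, (xA/xB)·(min(1, yA/xA)/min(1, yB/xB)) = (yA/yB)·(min(1, xA/yA)/min(1, xB/yB)), and both sides equal min(xA, yA)/min(xB, yB). -/
lemma mul_min_one_div (x y : ℝ) (hx : 0 < x) : x * min 1 (y / x) = min x y := by
  rcases le_total x y with h | h
  · rw [min_eq_left h, min_eq_left (by rwa [le_div_iff₀ hx, one_mul]), mul_one]
  · rw [min_eq_right h, min_eq_right (by rwa [div_le_one hx]), mul_div_cancel₀ _ hx.ne']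

lemma key (x x' y y' : ℝ) (hx : 0 < x) (hx' : 0 < x') :
    (x / x') * (min 1 (y / x) / min 1 (y' / x')) = min x y / min x' y' := by
  rw [div_mul_div_comm, mul_min_one_div _ _ hx, mul_min_one_div _ _ hx']

/-- Companion observers applying SSA together with SIA agree even when each
uses only observers of its own type as reference class, and the common odds are
min(xA,yA)/min(xB,yB). -/
theorem ssa_with_sia_narrow_reference_class_agreement
    (xA xB yA yB : ℝ) (hxA : 0 < xA) (hxB : 0 < xB) (hyA : 0 < yA) (hyB : 0 < yB) :
    (xA / xB) * (min 1 (yA / xA) / min 1 (yB / xB))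
        = (yA / yB) * (min 1 (xA / yA) / min 1 (xB / yB)) ∧
    (xA / xB) * (min 1 (yA / xA) / min 1 (yB / xB)) = min xA yA / min xB yB ∧
    (yA / yB) * (min 1 (xA / yA) / min 1 (xB / yB)) = min xA yA / min xB yB := by
  rw [key _ _ _ _ hxA hxB, key _ _ _ _ hyA hyB, min_comm yA, min_comm yB]
  exact ⟨rfl, rfl, rfl⟩
end

section
/- In the Sleeping Beauty problem with Prince, when SSA without SIA is applied with the reference class of all wakenings by all humans with a large number N of other wakenings, the answers converge to the FNC answers: the sequence a_N = (1/(N+3)) / (1/(N+3) + 2/(N+4)) converges to 1/3 as N → ∞, and the sequence b_N = (2/(N+3)) / (2/(N+3) + 2/(N+4)) converges to 1/2 as N → ∞. -/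
/-!
Multiplying numerator and denominator by `N` turns each weight `p / (N + a)` into
`p * (N / (N + a)) → p`, so the share of the first weight tends to `p / (p + q)`.
-/

open Filter Topology

theorem tendsto_div_natCast_add_share (p q a b : ℝ) (hpq : p + q ≠ 0) :
    Tendsto (fun N : ℕ => (p / ((N : ℝ) + a)) / (p / ((N : ℝ) + a) + q / ((N : ℝ) + b)))
      atTop (𝓝 (p / (p + q))) := by
  have hp := (tendsto_natCast_div_add_atTop a).const_mul p
  have hq := (tendsto_natCast_div_add_atTop b).const_mul q
  rw [mul_one] at hp hq
  refine (hp.div (hp.add hq) hpq).congr' ?_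
  filter_upwards [eventually_ne_atTop 0] with N hN
  have hN' : (N : ℝ) ≠ 0 := Nat.cast_ne_zero.mpr hN
  simp only [Pi.div_apply]
  rw [mul_div_left_comm p, mul_div_left_comm q, ← mul_add, mul_div_mul_left _ _ hN']

/-- With a large reference class of N extra wakenings, the SSA−SIA answers in
the Sleeping Beauty with Prince problem converge to the FNC answers: Beauty's
probability of Heads a_N → 1/3 and the Prince's probability of Heads b_N → 1/2
as N → ∞. -/
theorem beauty_and_prince_large_reference_class_limits :
    Tendsto
      (fun N : ℕ =>
        (1 / ((N : ℝ) + 3)) / (1 / ((N : ℝ) + 3) + 2 / ((N : ℝ) + 4)))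
      atTop (nhds (1 / 3)) ∧
    Tendsto
      (fun N : ℕ =>
        (2 / ((N : ℝ) + 3)) / (2 / ((N : ℝ) + 3) + 2 / ((N : ℝ) + 4)))
      atTop (nhds (1 / 2)) := by
  constructor
  · convert tendsto_div_natCast_add_share 1 2 3 4 (by norm_num) using 2
    norm_num
  · convert tendsto_div_natCast_add_share 2 2 3 4 (by norm_num) using 2
    norm_num
end
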